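/- arXiv:2306.03667 — 4 statements merged into one kernel-verified Lean document; each statement's English description precedes it below -/
import Mathlib

section
/- For every unitary matrix U ∈ ℂ^{n×n} there exists a Hermitian matrix H ∈ ℂ^{n×n} such that U = exp(iH) and 2‖H‖ ≤ π‖U - 1‖, where ‖·‖ denotes the operator norm (largest singular value). -/
open Matrix

/-- The operator norm (largest singular value) of a square complex matrix. -/
noncomputable def opNorm {n : ℕ} (A : Matrix (Fin n) (Fin n) ℂ) : ℝ :=
  ‖Matrix.toEuclideanCLM (𝕜 := ℂ) A‖

section Aux

open scoped Matrix.Norms.L2Operator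

noncomputable abbrev matrixCStarAlgebra {n : ℕ} : CStarAlgebra (Matrix (Fin n) (Fin n) ℂ) :=
  Matrix.instCStarAlgebra

attribute [local instance] matrixCStarAlgebra

/-- key scalar inequality: for `z` on the unit circle, `2|arg z| ≤ π‖z - 1‖`. -/
lemma two_mul_abs_arg_le {z : ℂ} (hz : ‖z‖ = 1) :
    2 * |Complex.arg z| ≤ Real.pi * ‖z - 1‖ := by
  have hz0 : z ≠ 0 := by intro h; simp [h] at hz
  have habs : ‖z‖ = 1 := hz
  have hcos : Real.cos (Complex.arg z) = z.re := by
    rw [Complex.cos_arg hz0, habs, div_one]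
  have hπ := Real.pi_pos
  set θ := Complex.arg z with hθ
  have hθπ : |θ| ≤ Real.pi := Complex.abs_arg_le_pi z
  have hre : z.re ^ 2 + z.im ^ 2 = 1 := by
    have : ‖z‖ ^ 2 = 1 := by rw [habs]; norm_num
    rw [Complex.sq_norm, Complex.normSq_apply] at this; nlinarith [this]
  have hsq : ‖z - 1‖ ^ 2 = 2 - 2 * Real.cos θ := by
    rw [Complex.sq_norm, Complex.normSq_apply]
    simp only [Complex.sub_re, Complex.sub_im, Complex.one_re, Complex.one_im]
    rw [hcos]; nlinarith [hre]
  set s := Real.sin (|θ| / 2) with hs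
  have hcosabs : Real.cos |θ| = Real.cos θ := Real.cos_abs θ
  have hsq2 : Real.cos θ = 1 - 2 * s ^ 2 := by
    have := Real.cos_sq (|θ| / 2)
    have h2 : 2 * (|θ| / 2) = |θ| := by ring
    rw [h2, hcosabs] at this
    have hps : Real.sin (|θ| / 2) ^ 2 + Real.cos (|θ| / 2) ^ 2 = 1 :=
      Real.sin_sq_add_cos_sq _
    nlinarith [this, hps]
  have hs0 : 0 ≤ s := Real.sin_nonneg_of_nonneg_of_le_pi (by positivity) (by linarith [abs_nonneg θ])
  have hnorm : ‖z - 1‖ = 2 * s := by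
    have h4 : ‖z - 1‖ ^ 2 = (2 * s) ^ 2 := by rw [hsq, hsq2]; ring
    have := Real.sqrt_sq (norm_nonneg (z - 1))
    rw [← this, h4, Real.sqrt_sq (by positivity)]
  have hjordan : 2 / Real.pi * (|θ| / 2) ≤ s :=
    Real.mul_le_sin (by positivity) (by linarith)
  rw [hnorm]
  have : |θ| / Real.pi ≤ s := by
    have h : 2 / Real.pi * (|θ| / 2) = |θ| / Real.pi := by field_simp
    linarith [h ▸ hjordan]
  calc 2 * |θ| = Real.pi * (2 * (|θ| / Real.pi)) := by field_simp
    _ ≤ Real.pi * (2 * s) := by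
        have : 2 * (|θ| / Real.pi) ≤ 2 * s := by linarith
        exact mul_le_mul_of_nonneg_left this hπ.le

lemma stmt_1_aux {n : ℕ} (U : Matrix (Fin n) (Fin n) ℂ)
    (hU : U ∈ Matrix.unitaryGroup (Fin n) ℂ) :
    ∃ H : Matrix (Fin n) (Fin n) ℂ, H.IsHermitian ∧
      U = NormedSpace.exp (Complex.I • H) ∧
      2 * opNorm H ≤ Real.pi * opNorm (U - 1) := by
  have hUn : IsStarNormal U := isStarNormal_of_mem_unitary hU
  have hspecfin : (spectrum ℂ U).Finite := U.finite_spectrum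
  have hcont : ∀ f : ℂ → ℂ, ContinuousOn f (spectrum ℂ U) := fun f =>
    hspecfin.continuousOn f
  have hcircle : ∀ z ∈ spectrum ℂ U, ‖z‖ = 1 := by
    intro z hz
    have := spectrum.subset_circle_of_unitary hU hz
    simpa [Complex.dist_eq] using this
  set g : ℂ → ℂ := fun z => (Complex.arg z : ℂ) with hg
  refine ⟨cfc g U, ?_, ?_, ?_⟩
  · -- Hermitian
    have : IsSelfAdjoint (cfc g U) := by
      rw [isSelfAdjoint_iff, ← cfc_star g U]
      exact cfc_congr fun z hz => by
        simp [hg, RCLike.star_def, Complex.conj_ofReal]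
    exact this
  · -- exponential
    have hsmul : Complex.I • cfc g U = cfc (fun z => Complex.I • g z) U :=
      (cfc_smul Complex.I g U (hcont _)).symm
    rw [hsmul]
    have hnormal : IsStarNormal (cfc (fun z => Complex.I • g z) U) := cfc_predicate _ U
    rw [← CFC.complex_exp_eq_normedSpace_exp hnormal]
    rw [← cfc_comp Complex.exp (fun z => Complex.I • g z) U hUn
        Complex.continuous_exp.continuousOn (hcont _)]
    symm
    calc cfc (Complex.exp ∘ fun z => Complex.I • g z) U
        = cfc (id : ℂ → ℂ) U := by
          refine cfc_congr fun z hz => ?_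
          have h1 : ‖z‖ = 1 := by
            exact hcircle z hz
          have := Complex.norm_mul_exp_arg_mul_I z
          rw [h1, Complex.ofReal_one, one_mul] at this
          simpa [hg, Function.comp, smul_eq_mul, mul_comm] using this
      _ = U := cfc_id ℂ U hUn
  · -- norm bound
    have hop : ∀ A : Matrix (Fin n) (Fin n) ℂ, opNorm A = ‖A‖ := fun A =>
      (Matrix.cstar_norm_def A).symm
    rw [hop, hop]
    have hU1 : U - 1 = cfc (fun z : ℂ => z - 1) U := by
      rw [cfc_sub _ _ U (hcont _) (hcont _), cfc_id' ℂ U hUn, cfc_const 1 U hUn]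
      simp
    have key : ‖cfc g U‖ ≤ Real.pi / 2 * ‖U - 1‖ := by
      apply norm_cfc_le (by positivity)
      intro z hz
      have h2 := two_mul_abs_arg_le (hcircle z hz)
      have h3 : ‖z - 1‖ ≤ ‖U - 1‖ := by
        rw [hU1]
        exact norm_apply_le_norm_cfc (fun z : ℂ => z - 1) U hz (hcont _) hUn
      have h4 : ‖g z‖ = |Complex.arg z| := by
        simp [hg]
      rw [h4]
      nlinarith [Real.pi_pos, h2, h3]
    nlinarith [key, Real.pi_pos]

end Aux

/-- For every unitary `U ∈ ℂ^{n×n}` there is a Hermitian `H` with `U = exp(iH)` and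
`2‖H‖ ≤ π‖U - 1‖` in operator norm. -/
theorem stmt_1 {n : ℕ} (U : Matrix (Fin n) (Fin n) ℂ)
    (hU : U ∈ Matrix.unitaryGroup (Fin n) ℂ) :
    ∃ H : Matrix (Fin n) (Fin n) ℂ, H.IsHermitian ∧
      U = NormedSpace.exp (Complex.I • H) ∧
      2 * opNorm H ≤ Real.pi * opNorm (U - 1) := by
  exact stmt_1_aux U hU
end

section
/- Let V : ℂⁿ → ℂⁿ ⊗ ℂ^{2n²} and ι_ψ : ℂⁿ → ℂⁿ ⊗ ℂ^{2n²}, ι_ψ(x) = x ⊗ ψ (with ψ a unit vector) be isometries such that tr_{ℂ^{2n²}}(V A V*) = tr_{ℂ^{2n²}}(ι_ψ A ι_ψ*) = A for all A ∈ ℂ^{n×n}. Then there exists a unitary W on ℂ^{2n²} such that V x = x ⊗ Wψ for all x ∈ ℂⁿ; in particular V A V* = A ⊗ |φ⟩⟨φ| with φ = Wψ. -/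
open Matrix

/-- Partial trace over the second tensor factor. -/
noncomputable def ptrace {n m : Type*} [Fintype m] (M : Matrix (n × m) (n × m) ℂ) :
    Matrix n n ℂ :=
  Matrix.of fun i j => ∑ k, M (i, k) (j, k)

open ComplexConjugate in
/-- Any two unit vectors in `ℂ^m` are related by a unitary matrix. -/
lemma exists_unitary_mulVec_eq {m : ℕ} (ψ φ : Fin m → ℂ)
    (hψ : star ψ ⬝ᵥ ψ = 1) (hφ : star φ ⬝ᵥ φ = 1) :
    ∃ W : Matrix (Fin m) (Fin m) ℂ, W ∈ Matrix.unitaryGroup (Fin m) ℂ ∧ W.mulVec ψ = φ := by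
  rcases Nat.eq_zero_or_pos m with hm | hm
  · subst hm
    simp [dotProduct] at hψ
  haveI : NeZero m := ⟨hm.ne'⟩
  have card : Module.finrank ℂ (EuclideanSpace ℂ (Fin m)) = Fintype.card (Fin m) := by
    simp
  have hinner : ∀ (x : Fin m → ℂ), star x ⬝ᵥ x = 1 →
      @inner ℂ (EuclideanSpace ℂ (Fin m)) _ (WithLp.toLp 2 x) (WithLp.toLp 2 x) = 1 := by
    intro x hx
    rw [PiLp.inner_apply, ← hx]
    simp only [dotProduct]
    exact Finset.sum_congr rfl fun i _ => by simp [RCLike.inner_apply, mul_comm]; exact (Complex.mul_conj' _).symm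
  have key : ∀ (x : Fin m → ℂ), star x ⬝ᵥ x = 1 →
      ∃ b : OrthonormalBasis (Fin m) ℂ (EuclideanSpace ℂ (Fin m)), b 0 = x := by
    intro x hx
    have horth : @Orthonormal ℂ (EuclideanSpace ℂ (Fin m)) _ _ _ _
        (Set.restrict {(0 : Fin m)} (fun _ => WithLp.toLp 2 x)) := by
      rw [orthonormal_iff_ite]
      intro i j
      have hij : i = j := Subtype.ext (i.2.trans j.2.symm)
      subst hij
      rw [if_pos rfl]
      exact hinner x hx
    obtain ⟨b, hb⟩ := horth.exists_orthonormalBasis_extension_of_card_eq card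
    exact ⟨b, congrArg WithLp.ofLp (hb 0 rfl)⟩
  obtain ⟨b, hb⟩ := key ψ hψ
  obtain ⟨c, hc⟩ := key φ hφ
  set B : Matrix (Fin m) (Fin m) ℂ := Matrix.of fun k l => (b l : Fin m → ℂ) k with hB
  set C : Matrix (Fin m) (Fin m) ℂ := Matrix.of fun k l => (c l : Fin m → ℂ) k with hC
  have unit : ∀ (d : OrthonormalBasis (Fin m) ℂ (EuclideanSpace ℂ (Fin m))),
      (Matrix.of fun k l => (d l : Fin m → ℂ) k) ∈ Matrix.unitaryGroup (Fin m) ℂ := by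
    intro d
    have h1 : (Matrix.of fun k l => (d l : Fin m → ℂ) k)ᴴ *
        (Matrix.of fun k l => (d l : Fin m → ℂ) k) = 1 := by
      ext k l
      have h := (orthonormal_iff_ite.mp d.orthonormal) k l
      rw [PiLp.inner_apply] at h
      simp only [RCLike.inner_apply] at h
      simp only [Matrix.mul_apply, Matrix.conjTranspose_apply, Matrix.of_apply, Matrix.one_apply]
      simpa [Complex.star_def, mul_comm] using h
    rw [Matrix.mem_unitaryGroup_iff, Matrix.star_eq_conjTranspose]
    exact mul_eq_one_comm.mpr h1
  have hBmem := unit b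
  have hBstar : Bᴴ ∈ Matrix.unitaryGroup (Fin m) ℂ := by
    rw [← Matrix.star_eq_conjTranspose]
    exact Unitary.star_mem hBmem
  refine ⟨C * Bᴴ, mul_mem (unit c) hBstar, ?_⟩
  have hBψ : Bᴴ.mulVec ψ = Pi.single 0 1 := by
    ext l
    have h := (orthonormal_iff_ite.mp b.orthonormal) l 0
    rw [PiLp.inner_apply, hb] at h
    simp only [RCLike.inner_apply] at h
    simp only [Matrix.mulVec, dotProduct, Matrix.conjTranspose_apply, hB, Matrix.of_apply,
      Complex.star_def]
    rw [Pi.single_apply, ← h]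
    exact Finset.sum_congr rfl fun x _ => mul_comm _ _
  rw [← Matrix.mulVec_mulVec, hBψ]
  ext k
  rw [← hc]
  simp [Matrix.mulVec, dotProduct, Pi.single_apply, hC]

/-- If `V : ℂⁿ → ℂⁿ ⊗ ℂ^{2n²}` is an isometry whose associated channel
`A ↦ tr_{ℂ^{2n²}}(V A V*)` is the identity (as is the case for `ι_ψ : x ↦ x ⊗ ψ` with `ψ` a
unit vector), then there is a unitary `W` on `ℂ^{2n²}` with `Vx = x ⊗ Wψ` for all `x`; in
particular `V A V* = A ⊗ |φ⟩⟨φ|` with `φ = Wψ`. -/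
theorem stmt_8 {n : ℕ} (V : Matrix (Fin n × Fin (2 * n ^ 2)) (Fin n) ℂ)
    (hV : Vᴴ * V = 1)
    (ψ : Fin (2 * n ^ 2) → ℂ) (hψ : star ψ ⬝ᵥ ψ = 1)
    (hVtr : ∀ A : Matrix (Fin n) (Fin n) ℂ, ptrace (V * A * Vᴴ) = A) :
    ∃ W : Matrix (Fin (2 * n ^ 2)) (Fin (2 * n ^ 2)) ℂ,
      W ∈ Matrix.unitaryGroup (Fin (2 * n ^ 2)) ℂ ∧
      (∀ x : Fin n → ℂ, V.mulVec x = fun p => x p.1 * W.mulVec ψ p.2) ∧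
      ∀ A : Matrix (Fin n) (Fin n) ℂ,
        V * A * Vᴴ =
          Matrix.of fun p q => A p.1 q.1 * (W.mulVec ψ p.2 * star (W.mulVec ψ q.2)) := by
  rcases Nat.eq_zero_or_pos n with hn | hn
  · subst hn
    have : IsEmpty (Fin (2 * 0 ^ 2)) := by rw [show 2 * 0 ^ 2 = 0 from rfl]; infer_instance
    simp [dotProduct] at hψ
  haveI : NeZero n := ⟨hn.ne'⟩
  -- Step 1: key sum identity from the identity-channel hypothesis
  have hS : ∀ (i j i' l : Fin n),
      ∑ k, V (i, k) j * star (V (i', k) l) = if j = i ∧ l = i' then 1 else 0 := by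
    intro i j i' l
    have hent : ∀ p q, (V * Matrix.single j l (1:ℂ) * Vᴴ) p q
        = V p j * star (V q l) := by
      intro p q
      simp [Matrix.mul_apply, Matrix.single, Matrix.conjTranspose_apply,
        ite_and, Finset.sum_ite_eq, mul_ite, ite_mul, Finset.sum_mul]
    have h := congrFun (congrFun (hVtr (Matrix.single j l 1)) i) i'
    simp only [ptrace, Matrix.of_apply, hent] at h
    rw [h]
    simp [Matrix.single]
  -- helper: a sum of |z|² being zero forces each term zero
  have hsumzero : ∀ (f : Fin (2 * n ^ 2) → ℂ), (∑ k, f k * star (f k)) = 0 → ∀ k, f k = 0 := by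
    intro f hf k
    have hre : ∑ k', Complex.normSq (f k') = 0 := by
      simp only [Complex.star_def, Complex.mul_conj] at hf
      exact_mod_cast hf
    have := (Finset.sum_eq_zero_iff_of_nonneg
      (fun k' _ => Complex.normSq_nonneg (f k'))).mp hre k (Finset.mem_univ k)
    exact Complex.normSq_eq_zero.mp this
  set φ : Fin (2 * n ^ 2) → ℂ := fun k => V (0, k) 0 with hφdef
  have hVform : ∀ (i j : Fin n) (k : Fin (2 * n ^ 2)),
      V (i, k) j = if i = j then φ k else 0 := by
    intro i j k
    by_cases hij : i = j
    · subst hij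
      rw [if_pos rfl]
      have hdiff : ∑ k', (V (i, k') i - φ k') * star (V (i, k') i - φ k') = 0 := by
        have e : ∀ k', (V (i, k') i - φ k') * star (V (i, k') i - φ k')
            = V (i, k') i * star (V (i, k') i) - V (i, k') i * star (V (0, k') 0)
              - (V (0, k') 0 * star (V (i, k') i) - V (0, k') 0 * star (V (0, k') 0)) := by
          intro k'
          simp only [hφdef, star_sub]
          ring
        rw [Finset.sum_congr rfl fun k' _ => e k', Finset.sum_sub_distrib,
          Finset.sum_sub_distrib, Finset.sum_sub_distrib, hS, hS, hS, hS]
        simp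
      have := hsumzero _ hdiff k
      linear_combination this
    · rw [if_neg hij]
      have h := hS i j i j
      rw [if_neg (fun hc => hij hc.1.symm)] at h
      exact hsumzero _ h k
  have hφunit : star φ ⬝ᵥ φ = 1 := by
    have h := hS 0 0 0 0
    rw [if_pos ⟨rfl, rfl⟩] at h
    rw [← h]
    simp [dotProduct, mul_comm, hφdef]
  obtain ⟨W, hWmem, hWψ⟩ := exists_unitary_mulVec_eq ψ φ hψ hφunit
  refine ⟨W, hWmem, ?_, ?_⟩
  · intro x
    funext p
    rw [hWψ]
    simp only [Matrix.mulVec, dotProduct]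
    rw [Finset.sum_congr rfl fun j _ => by rw [show V p j = _ from hVform p.1 j p.2]]
    simp [ite_mul, Finset.sum_ite_eq, mul_comm]
  · intro A
    rw [hWψ]
    have hVA : ∀ (p : Fin n × Fin (2 * n ^ 2)) x, (V * A) p x = φ p.2 * A p.1 x := by
      intro p x
      rw [Matrix.mul_apply]
      rw [Finset.sum_congr rfl fun y _ => by rw [show V p y = _ from hVform p.1 y p.2]]
      simp [ite_mul, Finset.sum_ite_eq]
    ext p q
    rw [Matrix.mul_apply]
    rw [Finset.sum_congr rfl fun x _ =>
      by rw [hVA p x, Matrix.conjTranspose_apply, show V q x = _ from hVform q.1 x q.2]]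
    simp only [Matrix.of_apply, apply_ite (star : ℂ → ℂ), star_zero, mul_ite, mul_zero,
      Finset.sum_ite_eq, Finset.mem_univ, if_true]
    ring
end

section
/- Let U be the unitary block matrix built from an isometry V : ℂⁿ → ℂⁿ ⊗ ℂ^m and unitary W as U = [[ (1⊗W)Vι*, (1⊗W)(1 - VV*)(1⊗W)* ], [ 1 - ιι*, -ιV*(1⊗W)* ]], with ι(x) = x ⊗ |0⟩. Then for all density matrices ρ ∈ ℂ^{n×n}, tr_E( U (ρ ⊗ |0⟩⟨0| ⊗ |0⟩⟨0|) U* ) = tr_{ℂ^m}( V ρ V* ), where tr_E traces out the environment ℂ^m ⊗ ℂ². -/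
open Matrix Kronecker
open scoped ComplexOrder

/-- Partial trace over the environment `ℂ^m ⊗ ℂ²`, where the qubit factor `ℂ²` indexes the
two blocks of the direct sum `(ℂⁿ ⊗ ℂ^m) ⊕ (ℂⁿ ⊗ ℂ^m)`. -/
noncomputable def ptraceEnv {n m : Type*} [Fintype m]
    (M : Matrix ((n × m) ⊕ (n × m)) ((n × m) ⊕ (n × m)) ℂ) : Matrix n n ℂ :=
  Matrix.of fun i j =>
    (∑ k, M (Sum.inl (i, k)) (Sum.inl (j, k))) + ∑ k, M (Sum.inr (i, k)) (Sum.inr (j, k))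

/-- The embedding `ι : ℂⁿ → ℂⁿ ⊗ ℂ^m`, `x ↦ x ⊗ |0⟩`, as a matrix. -/
noncomputable def iotaZero {n m : ℕ} [NeZero m] : Matrix (Fin n × Fin m) (Fin n) ℂ :=
  Matrix.of fun p q => if p.1 = q ∧ p.2 = 0 then 1 else 0

/-- The rank-one projection `|0⟩⟨0|` on `ℂ^m`. -/
noncomputable def projZero {m : ℕ} [NeZero m] : Matrix (Fin m) (Fin m) ℂ :=
  Matrix.of fun k l => if k = 0 ∧ l = 0 then 1 else 0

lemma iota_iota {n m : ℕ} [NeZero m] :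
    (iotaZero : Matrix (Fin n × Fin m) (Fin n) ℂ)ᴴ *
      (iotaZero : Matrix (Fin n × Fin m) (Fin n) ℂ) = 1 := by
  ext i j
  simp [mul_apply, iotaZero, conjTranspose_apply, Fintype.sum_prod_type, one_apply,
    ite_and, Finset.sum_ite_eq, Finset.sum_ite_eq', apply_ite (starRingEnd ℂ), eq_comm]

lemma kron_proj {n m : ℕ} [NeZero m] (ρ : Matrix (Fin n) (Fin n) ℂ) :
    ρ ⊗ₖ (@projZero m _) = @HMul.hMul _ _ (Matrix (Fin n × Fin m) (Fin n × Fin m) ℂ)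
      Matrix.instHMulOfFintypeOfMulOfAddCommMonoid
      ((@iotaZero n m _ : Matrix (Fin n × Fin m) (Fin n) ℂ) * ρ : Matrix (Fin n × Fin m) (Fin n) ℂ)
      ((@iotaZero n m _)ᴴ : Matrix (Fin n) (Fin n × Fin m) ℂ) := by
  ext ⟨i, k⟩ ⟨j, l⟩
  simp [mul_apply, iotaZero, projZero, conjTranspose_apply, kroneckerMap_apply,
    ite_and, Finset.sum_ite_eq, Finset.sum_ite_eq', apply_ite (starRingEnd ℂ), eq_comm,
    mul_comm]
  split_ifs <;> rfl

lemma ptrace_comm {n m : ℕ} (M : Matrix (Fin n × Fin m) (Fin n × Fin m) ℂ)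
    (S : Matrix (Fin m) (Fin m) ℂ) :
    ptrace (M * ((1 : Matrix (Fin n) (Fin n) ℂ) ⊗ₖ S)) =
      ptrace (((1 : Matrix (Fin n) (Fin n) ℂ) ⊗ₖ S) * M) := by
  ext i j
  simp only [ptrace, of_apply, mul_apply, Fintype.sum_prod_type, kroneckerMap_apply,
    one_apply, ite_mul, mul_ite, one_mul, mul_one, zero_mul, mul_zero,
    Finset.sum_ite_eq, Finset.sum_ite_eq', Finset.mem_univ, if_true]
  rw [Finset.sum_comm]
  simp only [Finset.sum_ite_irrel, Finset.sum_const_zero, Finset.sum_ite_eq,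
    Finset.sum_ite_eq', Finset.mem_univ, if_true]
  rw [Finset.sum_comm]
  exact Finset.sum_congr rfl fun _ _ => Finset.sum_congr rfl fun _ _ => mul_comm _ _

lemma one_kron_conjT {n m : ℕ} (W : Matrix (Fin m) (Fin m) ℂ) :
    (((1 : Matrix (Fin n) (Fin n) ℂ) ⊗ₖ W))ᴴ = (1 : Matrix (Fin n) (Fin n) ℂ) ⊗ₖ Wᴴ := by
  ext ⟨i, k⟩ ⟨j, l⟩
  simp [conjTranspose_apply, kroneckerMap_apply, one_apply, apply_ite (starRingEnd ℂ),
    eq_comm]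

lemma ptrace_conj {n m : ℕ} (W : Matrix (Fin m) (Fin m) ℂ) (hW : Wᴴ * W = 1)
    (M : Matrix (Fin n × Fin m) (Fin n × Fin m) ℂ) :
    ptrace (((1 : Matrix (Fin n) (Fin n) ℂ) ⊗ₖ W) * M *
      ((1 : Matrix (Fin n) (Fin n) ℂ) ⊗ₖ W)ᴴ) = ptrace M := by
  rw [one_kron_conjT, ptrace_comm, ← Matrix.mul_assoc, ← Matrix.mul_kronecker_mul,
    Matrix.one_mul, hW, Matrix.one_kronecker_one, Matrix.one_mul]

lemma ptrace_zero {n m : ℕ} : ptrace (0 : Matrix (Fin n × Fin m) (Fin n × Fin m) ℂ) = 0 := by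
  ext i j; simp [ptrace]

lemma ptraceEnv_fromBlocks {n m : ℕ}
    (X B C Y : Matrix (Fin n × Fin m) (Fin n × Fin m) ℂ) :
    ptraceEnv (Matrix.fromBlocks X B C Y) = ptrace X + ptrace Y := by
  ext i j
  simp [ptraceEnv, ptrace]

/-- For the unitary block matrix `U` built from an isometry `V : ℂⁿ → ℂⁿ ⊗ ℂ^m` and a
unitary `W`, and every density matrix `ρ`,
`tr_E(U (ρ ⊗ |0⟩⟨0| ⊗ |0⟩⟨0|) U*) = tr_{ℂ^m}(V ρ V*)`, where `tr_E` traces out `ℂ^m ⊗ ℂ²`. -/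
theorem stmt_13 {n m : ℕ} [NeZero m]
    (V : Matrix (Fin n × Fin m) (Fin n) ℂ) (hV : Vᴴ * V = 1)
    (W : Matrix (Fin m) (Fin m) ℂ) (hW : W ∈ Matrix.unitaryGroup (Fin m) ℂ)
    (U : Matrix ((Fin n × Fin m) ⊕ (Fin n × Fin m)) ((Fin n × Fin m) ⊕ (Fin n × Fin m)) ℂ)
    (hU : U = Matrix.fromBlocks
      (((1 : Matrix (Fin n) (Fin n) ℂ) ⊗ₖ W) * V * iotaZeroᴴ)
      (((1 : Matrix (Fin n) (Fin n) ℂ) ⊗ₖ W) * (1 - V * Vᴴ) *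
        ((1 : Matrix (Fin n) (Fin n) ℂ) ⊗ₖ W)ᴴ)
      (1 - iotaZero * iotaZeroᴴ)
      (-(iotaZero * Vᴴ * ((1 : Matrix (Fin n) (Fin n) ℂ) ⊗ₖ W)ᴴ)))
    (ρ : Matrix (Fin n) (Fin n) ℂ) (hρ : ρ.PosSemidef) (hρtr : ρ.trace = 1) :
    ptraceEnv (U * Matrix.fromBlocks (ρ ⊗ₖ projZero) 0 0 0 * Uᴴ) = ptrace (V * ρ * Vᴴ) := by
  have hWW : Wᴴ * W = 1 := by
    have := hW.1
    rwa [Matrix.star_eq_conjTranspose] at this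
  set A : Matrix (Fin n × Fin m) (Fin n × Fin m) ℂ :=
    ((1 : Matrix (Fin n) (Fin n) ℂ) ⊗ₖ W) * V * (@iotaZero n m _)ᴴ with hA
  set C : Matrix (Fin n × Fin m) (Fin n × Fin m) ℂ :=
    1 - (iotaZero : Matrix (Fin n × Fin m) (Fin n) ℂ) * (@iotaZero n m _)ᴴ with hC
  have hCP : C * (ρ ⊗ₖ projZero) = 0 := by
    rw [hC, kron_proj, sub_mul, Matrix.one_mul]
    have : @iotaZero n m _ * (@iotaZero n m _)ᴴ *
        (@iotaZero n m _ * ρ * (@iotaZero n m _)ᴴ) =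
        @iotaZero n m _ * ρ * (@iotaZero n m _)ᴴ := by
      simp only [Matrix.mul_assoc]
      rw [← Matrix.mul_assoc iotaZeroᴴ iotaZero, iota_iota, Matrix.one_mul]
    rw [this, sub_self]
  have hAP : A * (ρ ⊗ₖ projZero) * Aᴴ =
      ((1 : Matrix (Fin n) (Fin n) ℂ) ⊗ₖ W) * (V * ρ * Vᴴ) *
        ((1 : Matrix (Fin n) (Fin n) ℂ) ⊗ₖ W)ᴴ := by
    rw [hA, kron_proj]
    simp only [Matrix.conjTranspose_mul, Matrix.conjTranspose_conjTranspose]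
    simp only [Matrix.mul_assoc]
    rw [← Matrix.mul_assoc iotaZeroᴴ iotaZero, iota_iota, Matrix.one_mul,
      ← Matrix.mul_assoc iotaZeroᴴ iotaZero, iota_iota, Matrix.one_mul]
  rw [hU, Matrix.fromBlocks_conjTranspose, Matrix.fromBlocks_multiply,
    Matrix.fromBlocks_multiply]
  simp only [Matrix.mul_zero, Matrix.zero_mul, add_zero, zero_add, mul_zero, zero_mul]
  rw [ptraceEnv_fromBlocks]
  rw [show (1 - iotaZero * iotaZeroᴴ) * (ρ ⊗ₖ projZero) = C * (ρ ⊗ₖ projZero) from rfl, hCP]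
  rw [show ((1 : Matrix (Fin n) (Fin n) ℂ) ⊗ₖ W) * V * iotaZeroᴴ * (ρ ⊗ₖ projZero) *
      (((1 : Matrix (Fin n) (Fin n) ℂ) ⊗ₖ W) * V * iotaZeroᴴ)ᴴ = A * (ρ ⊗ₖ projZero) * Aᴴ
      from rfl, hAP]
  rw [Matrix.zero_mul, ptrace_zero, add_zero, ptrace_conj W hWW]
end

section
/- Let V : [0, t_f) → ℂ^{m×n} (m ≥ n) be a continuously differentiable curve of isometries with V(0) = (e₁ … e_n) (the first n standard basis columns). Let Q(t) := (1 - V(t)V(t)*)V'(t)V(t)* - V(t)V'(t)*(1 - V(t)V(t)*) and let W : [0, t_f) → U(m) solve W'(t) = Q(t)W(t), W(0) = 1. Then W(t)(1 - V(0)V(0)*)W(t)* = 1 - V(t)V(t)* for all t. -/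
open Matrix

lemma matMulDeriv {m n p : ℕ} {D : Set ℝ} {t : ℝ}
    {A : ℝ → Matrix (Fin m) (Fin n) ℂ} {A' : Matrix (Fin m) (Fin n) ℂ}
    {B : ℝ → Matrix (Fin n) (Fin p) ℂ} {B' : Matrix (Fin n) (Fin p) ℂ}
    (hA : ∀ i j, HasDerivWithinAt (fun s => A s i j) (A' i j) D t)
    (hB : ∀ i j, HasDerivWithinAt (fun s => B s i j) (B' i j) D t) :
    ∀ i j, HasDerivWithinAt (fun s => (A s * B s) i j)
      ((A' * B t + A t * B') i j) D t := by
  intro i j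
  have : HasDerivWithinAt (fun s => ∑ k, A s i k * B s k j)
      (∑ k, (A' i k * B t k j + A t i k * B' k j)) D t :=
    HasDerivWithinAt.fun_sum (fun k _ => (hA i k).mul (hB k j))
  simpa [Matrix.mul_apply, Matrix.add_apply, Finset.sum_add_distrib] using this

lemma constOfDerivZero {D : Set ℝ} (hconv : Convex ℝ D) (f : ℝ → ℂ)
    (hf : ∀ t ∈ D, HasDerivWithinAt f 0 D t) {a b : ℝ} (ha : a ∈ D) (hb : b ∈ D) :
    f a = f b := by
  have h0 : (ContinuousLinearMap.toSpanSingleton ℝ (0 : ℂ)) = 0 := by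
    ext; simp
  have hf' : ∀ t ∈ D, HasFDerivWithinAt f (0 : ℝ →L[ℝ] ℂ) D t := by
    intro t ht
    have := (hf t ht).hasFDerivWithinAt
    rwa [h0] at this
  have := hconv.norm_image_sub_le_of_norm_hasFDerivWithin_le
    (f' := fun _ => (0 : ℝ →L[ℝ] ℂ)) (C := 0) (fun x hx => hf' x hx)
    (fun x hx => le_of_eq norm_zero) hb ha
  simp only [norm_zero, zero_mul] at this
  exact sub_eq_zero.mp (norm_le_zero_iff.mp this)


/-- Kato's intertwining construction: if `V : [0,t_f) → ℂ^{m×n}` is a continuously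
differentiable curve of isometries with `V(0)` the first `n` standard basis columns,
`Q(t) = (1 - V(t)V(t)*)V'(t)V(t)* - V(t)V'(t)*(1 - V(t)V(t)*)`, and `W` solves
`W' = QW`, `W(0) = 1`, with `W(t)` unitary, then
`W(t)(1 - V(0)V(0)*)W(t)* = 1 - V(t)V(t)*` for all `t`. -/
theorem stmt_18 {m n : ℕ} (hmn : n ≤ m) (D : Set ℝ)
    (hD : D = Set.Ici 0 ∨ ∃ t_f > (0 : ℝ), D = Set.Ico 0 t_f)
    (V V' : ℝ → Matrix (Fin m) (Fin n) ℂ)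
    (hiso : ∀ t ∈ D, (V t)ᴴ * V t = 1)
    (hV0 : V 0 = Matrix.of fun (i : Fin m) (j : Fin n) => if (i : ℕ) = (j : ℕ) then 1 else 0)
    (hVderiv : ∀ t ∈ D, ∀ i j, HasDerivWithinAt (fun s => V s i j) (V' t i j) D t)
    (hV'cont : ContinuousOn V' D)
    (Q : ℝ → Matrix (Fin m) (Fin m) ℂ)
    (hQ : ∀ t, Q t = (1 - V t * (V t)ᴴ) * V' t * (V t)ᴴ -
      V t * (V' t)ᴴ * (1 - V t * (V t)ᴴ))
    (W : ℝ → Matrix (Fin m) (Fin m) ℂ)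
    (hWuni : ∀ t ∈ D, W t ∈ Matrix.unitaryGroup (Fin m) ℂ)
    (hW0 : W 0 = 1)
    (hWderiv : ∀ t ∈ D, ∀ i j, HasDerivWithinAt (fun s => W s i j) ((Q t * W t) i j) D t) :
    ∀ t ∈ D, W t * (1 - V 0 * (V 0)ᴴ) * (W t)ᴴ = 1 - V t * (V t)ᴴ := by
  have h0D : (0 : ℝ) ∈ D := by
    rcases hD with h | ⟨tf, htf, h⟩ <;> subst h
    · exact Set.self_mem_Ici
    · exact Set.mem_Ico.mpr ⟨le_refl 0, htf⟩
  have hconv : Convex ℝ D := by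
    rcases hD with h | ⟨tf, htf, h⟩ <;> subst h
    · exact convex_Ici 0
    · exact convex_Ico 0 tf
  have hUD : UniqueDiffOn ℝ D := by
    rcases hD with h | ⟨tf, htf, h⟩ <;> subst h
    · exact uniqueDiffOn_Ici 0
    · exact uniqueDiffOn_Ico 0 tf
  -- derivative of the conjugated function X(s) = W(s)ᴴ (V(s) V(s)ᴴ) W(s) is zero on D
  have hXzero : ∀ τ ∈ D, ∀ i j,
      HasDerivWithinAt (fun s => ((W s)ᴴ * (V s * (V s)ᴴ) * W s) i j) 0 D τ := by
    intro τ hτ i j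
    have hA := hVderiv τ hτ
    have hAH : ∀ i j, HasDerivWithinAt (fun s => (V s)ᴴ i j) ((V' τ)ᴴ i j) D τ := by
      intro i j
      simpa [conjTranspose_apply] using (hVderiv τ hτ j i).star
    have hWH : ∀ i j, HasDerivWithinAt (fun s => (W s)ᴴ i j) ((Q τ * W τ)ᴴ i j) D τ := by
      intro i j
      simpa [conjTranspose_apply] using (hWderiv τ hτ j i).star
    -- skew-symmetry relation from differentiating VᴴV = 1
    have hd1 := matMulDeriv hAH hA
    have hd0 : ∀ i j, HasDerivWithinAt (fun s => ((V s)ᴴ * V s) i j)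
        (0 : ℂ) D τ := by
      intro i j
      exact (hasDerivWithinAt_const τ D ((1 : Matrix (Fin n) (Fin n) ℂ) i j)).congr
        (fun s hs => by rw [hiso s hs]) (by rw [hiso τ hτ])
    have hskew : (V' τ)ᴴ * V τ + (V τ)ᴴ * V' τ = 0 := by
      ext i j
      simpa using (hUD τ hτ).eq_deriv _ (hd1 i j) (hd0 i j)
    have h1 : (V τ)ᴴ * V τ = 1 := hiso τ hτ
    have h2 : (V τ)ᴴ * V' τ = -((V' τ)ᴴ * V τ) := by
      rw [add_comm] at hskew
      rwa [add_eq_zero_iff_eq_neg] at hskew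
    have e1 : ∀ (p : ℕ) (X : Matrix (Fin n) (Fin p) ℂ),
        (V τ)ᴴ * (V τ * X) = X := by
      intro p X; rw [← Matrix.mul_assoc, h1, Matrix.one_mul]
    have e2 : ∀ (p : ℕ) (X : Matrix (Fin n) (Fin p) ℂ),
        (V τ)ᴴ * (V' τ * X) = -((V' τ)ᴴ * (V τ * X)) := by
      intro p X; rw [← Matrix.mul_assoc, h2, Matrix.neg_mul, Matrix.mul_assoc]
    have hcomm : Q τ * (V τ * (V τ)ᴴ) - (V τ * (V τ)ᴴ) * Q τ
        = V' τ * (V τ)ᴴ + V τ * (V' τ)ᴴ := by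
      rw [hQ]
      simp only [Matrix.sub_mul, Matrix.mul_sub, Matrix.one_mul, Matrix.mul_one,
        Matrix.mul_assoc, Matrix.neg_mul, Matrix.mul_neg, e1, e2, h1, h2, neg_neg]
      abel
    have hQH : (Q τ)ᴴ = -(Q τ) := by
      rw [hQ]
      simp only [conjTranspose_sub, conjTranspose_mul, conjTranspose_one,
        conjTranspose_conjTranspose, Matrix.mul_assoc, Matrix.mul_sub, Matrix.sub_mul,
        Matrix.mul_one, Matrix.one_mul, neg_sub]
    -- assemble the product rule
    have hP := matMulDeriv hA hAH
    have hXi := matMulDeriv hWH hP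
    have hX := matMulDeriv hXi (hWderiv τ hτ)
    have hval : ((Q τ * W τ)ᴴ * (V τ * (V τ)ᴴ)
          + (W τ)ᴴ * (V' τ * (V τ)ᴴ + V τ * (V' τ)ᴴ)) * W τ
        + (W τ)ᴴ * (V τ * (V τ)ᴴ) * (Q τ * W τ) = 0 := by
      rw [conjTranspose_mul, hQH, ← hcomm]
      noncomm_ring
    have := hX i j
    rw [hval] at this
    simpa using this
  intro t ht
  have hconst : ((W t)ᴴ * (V t * (V t)ᴴ) * W t) = ((W 0)ᴴ * (V 0 * (V 0)ᴴ) * W 0) := by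
    ext i j
    exact constOfDerivZero hconv (fun s => ((W s)ᴴ * (V s * (V s)ᴴ) * W s) i j)
      (fun τ hτ => hXzero τ hτ i j) ht h0D
  rw [hW0, conjTranspose_one, mul_one, one_mul] at hconst
  have hWW : W t * (W t)ᴴ = 1 := by
    have := (hWuni t ht).2
    rwa [Matrix.star_eq_conjTranspose] at this
  have e3 : ∀ (X : Matrix (Fin m) (Fin m) ℂ), W t * ((W t)ᴴ * X) = X := by
    intro X; rw [← mul_assoc, hWW, one_mul]
  rw [← hconst]
  simp only [mul_sub, sub_mul, one_mul, mul_one, mul_assoc, e3, hWW]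
end
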